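/- arXiv:1009.4442 — 2 statements merged into one kernel-verified Lean document; each statement's English description precedes it below -/
import Mathlib

section
/- Let P(ξ) = Σ_{k=1}^N c_k ξ^{2k+1} with c_k ≤ −1 for all k (more generally c_k ≤ 0 with c_N ≤ −1), and Q(m,l) = P(m+l) − P(m) − P(l). Then for l ≥ 1 and integers m_1 > m_2 ≥ 0, one has |Q(m_1,l) − Q(m_2,l)| ≥ (m_1 − m_2)·l^{2N}. -/
/-!
Write `x = m₁`, `y = m₂`, `t = l`. The terms `P l` cancel in `Q m₁ l - Q m₂ l`, which is therefore
`∑ c_k D_{2k+1}` with `D_n = ((x+t)^n - x^n) - ((y+t)^n - y^n)`. Factoring `x - y` out of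
`D_{n+1}` by the two-variable geometric sum leaves a sum of nonnegative terms, one of which is
`(x+t)^n - x^n ≥ t^n`; so every `D_{2k+1} ≥ (x-y) t^{2k} ≥ 0`. As all `c_k ≤ 0`, the sum is at
most `c_N D_{2N+1} ≤ -(x-y) t^{2N}`.
-/

open Finset

theorem add_pow_sub_pow_sub_add_pow_sub_pow_eq {R : Type*} [CommRing R] (x y t : R) (n : ℕ) :
    ((x + t) ^ (n + 1) - x ^ (n + 1)) - ((y + t) ^ (n + 1) - y ^ (n + 1)) =
      (∑ i ∈ range (n + 1), ((x + t) ^ i * (y + t) ^ (n - i) - x ^ i * y ^ (n - i))) * (x - y) := by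
  have hshift := geom_sum₂_mul (x + t) (y + t) (n + 1)
  have hbase := geom_sum₂_mul x y (n + 1)
  simp only [add_tsub_cancel_right, add_sub_add_right_eq_sub] at hshift hbase
  rw [sum_sub_distrib, sub_mul, hshift, hbase]
  ring

section

variable {R : Type*} [CommRing R] [PartialOrder R] [IsOrderedRing R]

theorem pow_le_add_pow_sub_pow {x t : R} {n : ℕ} (hn : n ≠ 0) (hx : 0 ≤ x) (ht : 0 ≤ t) :
    t ^ n ≤ (x + t) ^ n - x ^ n := by
  rw [le_sub_iff_add_le, add_comm x]
  exact pow_add_pow_le ht hx hn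

theorem mul_pow_le_add_pow_sub_pow_sub_add_pow_sub_pow {x y t : R} {n : ℕ} (hn : n ≠ 0)
    (hy : 0 ≤ y) (hxy : y ≤ x) (ht : 0 ≤ t) :
    (x - y) * t ^ n ≤ ((x + t) ^ (n + 1) - x ^ (n + 1)) - ((y + t) ^ (n + 1) - y ^ (n + 1)) := by
  have hx : 0 ≤ x := hy.trans hxy
  rw [add_pow_sub_pow_sub_add_pow_sub_pow_eq, mul_comm]
  refine mul_le_mul_of_nonneg_right ?_ (sub_nonneg.2 hxy)
  have hterm : ∀ i ∈ range (n + 1), 0 ≤ (x + t) ^ i * (y + t) ^ (n - i) - x ^ i * y ^ (n - i) :=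
    fun i _ ↦ sub_nonneg.2 <| mul_le_mul
      (pow_le_pow_left₀ hx (le_add_of_nonneg_right ht) i)
      (pow_le_pow_left₀ hy (le_add_of_nonneg_right ht) _)
      (pow_nonneg hy _) (pow_nonneg (add_nonneg hx ht) i)
  calc t ^ n ≤ (x + t) ^ n * (y + t) ^ (n - n) - x ^ n * y ^ (n - n) := by
        simpa using pow_le_add_pow_sub_pow hn hx ht
    _ ≤ _ := single_le_sum hterm (self_mem_range_succ n)

end

theorem sum_mul_le_neg_of_nonpos {ι R : Type*} [Ring R] [PartialOrder R] [IsOrderedRing R]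
    {s : Finset ι} {c b : ι → R} {i : ι} (hi : i ∈ s) (hc : ∀ k ∈ s, c k ≤ 0) (hci : c i ≤ -1)
    (hb : ∀ k ∈ s, 0 ≤ b k) :
    ∑ k ∈ s, c k * b k ≤ -b i := by
  classical
  have hrest : ∑ k ∈ s.erase i, c k * b k ≤ 0 := sum_nonpos fun k hk ↦
    mul_nonpos_of_nonpos_of_nonneg (hc k (mem_of_mem_erase hk)) (hb k (mem_of_mem_erase hk))
  calc ∑ k ∈ s, c k * b k = c i * b i + ∑ k ∈ s.erase i, c k * b k := (add_sum_erase s _ hi).symm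
    _ ≤ -1 * b i := add_le_of_le_of_nonpos (mul_le_mul_of_nonneg_right hci (hb i hi)) hrest
    _ = -b i := neg_one_mul _

theorem stmt_2 (N : ℕ) (hN : 1 ≤ N) (c : ℕ → ℝ)
    (hc : ∀ k ∈ Finset.Icc 1 N, c k ≤ -1)
    (P : ℝ → ℝ) (hP : ∀ ξ : ℝ, P ξ = ∑ k ∈ Finset.Icc 1 N, c k * ξ ^ (2 * k + 1))
    (Q : ℤ → ℤ → ℝ)
    (hQ : ∀ m l : ℤ, Q m l = P ((m : ℝ) + (l : ℝ)) - P (m : ℝ) - P (l : ℝ))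
    (l m₁ m₂ : ℤ) (hl : 1 ≤ l) (h₁₂ : m₂ < m₁) (hm₂ : 0 ≤ m₂) :
    ((m₁ : ℝ) - (m₂ : ℝ)) * (l : ℝ) ^ (2 * N) ≤ |Q m₁ l - Q m₂ l| := by
  set x : ℝ := (m₁ : ℝ)
  set y : ℝ := (m₂ : ℝ)
  set t : ℝ := (l : ℝ)
  have ht : 0 ≤ t := Int.cast_nonneg (by omega)
  have hy : 0 ≤ y := Int.cast_nonneg hm₂
  have hxy : y ≤ x := Int.cast_le.2 h₁₂.le
  set D : ℕ → ℝ := fun k ↦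
    ((x + t) ^ (2 * k + 1) - x ^ (2 * k + 1)) - ((y + t) ^ (2 * k + 1) - y ^ (2 * k + 1))
  have hQD : Q m₁ l - Q m₂ l = ∑ k ∈ Icc 1 N, c k * D k := by
    simp only [hQ, hP, D, mul_sub, sum_sub_distrib]
    ring
  have hD : ∀ k ∈ Icc 1 N, (x - y) * t ^ (2 * k) ≤ D k := fun k hk ↦
    mul_pow_le_add_pow_sub_pow_sub_add_pow_sub_pow (by grind) hy hxy ht
  have hN_mem : N ∈ Icc 1 N := mem_Icc.2 ⟨hN, le_rfl⟩
  have hsum := sum_mul_le_neg_of_nonpos hN_mem (fun k hk ↦ (hc k hk).trans (by norm_num))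
    (hc N hN_mem) fun k hk ↦ (mul_nonneg (sub_nonneg.2 hxy) (pow_nonneg ht _)).trans (hD k hk)
  rw [hQD]
  linarith [hD N hN_mem, neg_le_abs (∑ k ∈ Icc 1 N, c k * D k)]
end

section
/- For functions u with \hat u(n,λ) supported in {|n| ≤ K, |λ| ≤ K^{2N+1}} and |\hat u| = 1 there (the example u_K), one has ‖u_K‖_{L⁴_x L⁴_t} ≳ K^{3(N+1)/2}, showing the exponent b = (N+1)/(4N+2) in the embedding X^{0,b} ⊆ L⁴_{x,t} cannot be decreased. -/
/-!
Since the Fourier support is a product, `u_K(x, t) = D_K(x) · 2M sinc(2πMt)` with `D_K` the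
Dirichlet kernel and `M = K^(2N+1)`, and the `L⁴` norm factors. Each factor is a sum (integral)
of characters whose phases stay within `π/4` near the origin, so it is at least half its peak:
`|D_K| ≥ K` for `|x| ≤ 1/(8K)` and `|2M sinc(2πMt)| ≥ M` for `|t| ≤ 1/(8M)`. Hence
`‖D_K‖₄⁴ ≳ K³`, `‖2M sinc(2πM·)‖₄⁴ ≳ M³`, and `‖u_K‖₄ ≳ (K³M³)^(1/4) = K^(3(N+1)/2)`.
-/

open MeasureTheory Set Real

lemma mul_le_setIntegral_of_le_on_Icc {g : ℝ → ℝ} {s : Set ℝ} {c δ : ℝ} (hδ : 0 ≤ δ)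
    (hsub : Icc (-δ) δ ⊆ s) (hg : IntegrableOn g s) (hg0 : 0 ≤ g)
    (hc : ∀ t ∈ Icc (-δ) δ, c ≤ g t) : 2 * δ * c ≤ ∫ t in s, g t :=
  calc 2 * δ * c = c * volume.real (Icc (-δ) δ) := by
        rw [Real.volume_real_Icc_of_le (by linarith)]; ring
    _ ≤ ∫ t in Icc (-δ) δ, g t :=
        setIntegral_ge_of_const_le_real measurableSet_Icc measure_Icc_lt_top.ne hc
          (hg.mono_set hsub)
    _ ≤ ∫ t in s, g t :=
        setIntegral_mono_set hg (Filter.Eventually.of_forall hg0) hsub.eventuallyLE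

lemma integral_integral_norm_mul_pow {X Y 𝕜 : Type*} [MeasurableSpace X] [MeasurableSpace Y]
    [RCLike 𝕜] (μ : Measure X) (ν : Measure Y) (f : X → 𝕜) (g : Y → 𝕜) (p : ℕ) :
    ∫ x, ∫ y, ‖f x * g y‖ ^ p ∂ν ∂μ = (∫ x, ‖f x‖ ^ p ∂μ) * ∫ y, ‖g y‖ ^ p ∂ν := by
  simp_rw [norm_mul, mul_pow, integral_const_mul, integral_mul_const]

lemma one_half_le_sinc {x : ℝ} (hx : |x| ≤ π / 2) : 1 / 2 ≤ sinc x := by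
  wlog h0 : 0 ≤ x generalizing x
  · simpa using this (x := -x) (by rwa [abs_neg]) (by linarith)
  rcases h0.eq_or_lt with rfl | hpos
  · norm_num
  rw [sinc_of_ne_zero hpos.ne', le_div_iff₀ hpos]
  have hsin := mul_le_sin h0 (by rwa [abs_of_nonneg h0] at hx)
  have h2pi : 1 / 2 ≤ 2 / π := by
    rw [div_le_div_iff₀ two_pos pi_pos]; linarith [pi_le_four]
  nlinarith

lemma sinc_sq_le_two_mul_inv_one_add_sq (x : ℝ) : sinc x ^ 2 ≤ 2 * (1 + x ^ 2)⁻¹ := by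
  rw [← div_eq_mul_inv, le_div_iff₀ (by positivity)]
  have hle_one : sinc x ^ 2 ≤ 1 := by
    rw [← sq_abs]; exact pow_le_one₀ (abs_nonneg _) (abs_sinc_le_one x)
  rcases eq_or_ne x 0 with rfl | hx
  · simp
  have hdecay : sinc x ^ 2 * x ^ 2 ≤ 1 := by
    rw [sinc_of_ne_zero hx, div_pow, div_mul_cancel₀ _ (by positivity)]
    exact sin_sq_le_one x
  nlinarith

lemma integrable_sinc_pow {n : ℕ} (hn : 2 ≤ n) : Integrable fun x => sinc x ^ n := by
  refine (integrable_inv_one_add_sq.const_mul 2).mono'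
    (continuous_sinc.pow n).aestronglyMeasurable (Filter.Eventually.of_forall fun x => ?_)
  rw [norm_pow, Real.norm_eq_abs]
  calc |sinc x| ^ n ≤ |sinc x| ^ 2 :=
        pow_le_pow_of_le_one (abs_nonneg _) (abs_sinc_le_one x) hn
    _ = sinc x ^ 2 := sq_abs _
    _ ≤ _ := sinc_sq_le_two_mul_inv_one_add_sq x

lemma setIntegral_Icc_exp_eq_sinc (M t : ℝ) (hM : 0 ≤ M) :
    ∫ lam in Icc (-M) M, Complex.exp (2 * π * lam * t * Complex.I) =
      ((2 * M * sinc (2 * π * M * t) : ℝ) : ℂ) := by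
  rw [integral_Icc_eq_integral_Ioc, ← intervalIntegral.integral_of_le (by linarith)]
  rcases eq_or_ne t 0 with rfl | ht
  · simp; ring
  have key := intervalIntegral.integral_comp_mul_left (a := -M) (b := M)
    (fun s : ℝ => Complex.exp (s * Complex.I)) (by positivity : 2 * π * t ≠ 0)
  rw [mul_neg, integral_exp_mul_I_eq_sinc, Complex.real_smul] at key
  convert key using 1
  · congr 1; ext lam; push_cast; ring_nf
  · norm_cast
    rw [mul_comm _ M]
    field_simp

lemma le_integral_sinc_pow_four {M : ℝ} (hM : 0 < M) :
    M ^ 3 / 4 ≤ ∫ t, (2 * M * sinc (2 * π * M * t)) ^ 4 := by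
  have hint : Integrable fun t => (2 * M * sinc (2 * π * M * t)) ^ 4 := by
    simp_rw [mul_pow _ (sinc _)]
    exact ((integrable_sinc_pow (by norm_num)).comp_mul_left' (by positivity)).const_mul _
  have hpeak : ∀ t ∈ Icc (-(1 / (8 * M))) (1 / (8 * M)),
      M ^ 4 ≤ (2 * M * sinc (2 * π * M * t)) ^ 4 := by
    intro t ht
    have hMt : M * |t| ≤ 1 / 8 := by
      have := abs_le.2 ht
      rw [le_div_iff₀ (by positivity)] at this
      linarith
    have harg : |2 * π * M * t| ≤ π / 2 := by
      rw [abs_mul, abs_of_pos (by positivity), mul_assoc]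
      nlinarith [pi_pos]
    have := one_half_le_sinc harg
    gcongr
    nlinarith
  have := mul_le_setIntegral_of_le_on_Icc (by positivity) (subset_univ _) hint.integrableOn
    (fun t => by positivity) hpeak
  rw [setIntegral_univ] at this
  convert this using 1
  field_simp
  ring

noncomputable def dirichletKernel (T : ℝ) (K : ℕ) (x : AddCircle T) : ℂ :=
  ∑ n ∈ Finset.Icc (-(K : ℤ)) K, fourier n x

lemma one_half_le_cos_two_pi_mul {ξ τ A : ℝ} (hξ : |ξ| ≤ A) (hτ : |τ| ≤ 1 / (8 * A)) :
    1 / 2 ≤ cos (2 * π * ξ * τ) := by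
  have hA : 0 ≤ A := (abs_nonneg ξ).trans hξ
  have hξτ : |ξ| * |τ| ≤ 1 / 8 := by
    calc |ξ| * |τ| ≤ A * (1 / (8 * A)) := mul_le_mul hξ hτ (abs_nonneg τ) hA
      _ ≤ 1 / 8 := by
        rcases hA.eq_or_lt with rfl | hA
        · norm_num
        · exact le_of_eq (by field_simp)
  have harg : |2 * π * ξ * τ| ≤ 1 := by
    rw [abs_mul, abs_mul, abs_of_pos (by positivity), mul_assoc]
    nlinarith [pi_le_four, pi_pos]
  nlinarith [one_sub_sq_div_two_le_cos (x := 2 * π * ξ * τ), sq_abs (2 * π * ξ * τ),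
    abs_nonneg (2 * π * ξ * τ)]

lemma natCast_le_norm_dirichletKernel {T : ℝ} (hT : 0 < T) (K : ℕ) {τ : ℝ}
    (hτ : |τ| ≤ T / (8 * K)) : (K : ℝ) ≤ ‖dirichletKernel T K τ‖ := by
  have hre : (dirichletKernel T K τ).re =
      ∑ n ∈ Finset.Icc (-(K : ℤ)) K, cos (2 * π * n * (τ / T)) := by
    rw [dirichletKernel, Complex.re_sum]
    refine Finset.sum_congr rfl fun n _ => ?_
    rw [fourier_coe_apply, ← Complex.exp_ofReal_mul_I_re]
    push_cast
    ring_nf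
  have hτT : |τ / T| ≤ 1 / (8 * K) := by
    rwa [abs_div, abs_of_pos hT, div_le_iff₀ hT, div_mul_eq_mul_div, one_mul]
  have hcos : ∀ n ∈ Finset.Icc (-(K : ℤ)) K, 1 / 2 ≤ cos (2 * π * n * (τ / T)) := by
    intro n hn
    refine one_half_le_cos_two_pi_mul ?_ hτT
    rw [← Int.cast_abs, ← Int.cast_natCast]
    exact_mod_cast abs_le.2 (Finset.mem_Icc.1 hn)
  have hsum := Finset.card_nsmul_le_sum _ _ _ hcos
  rw [Int.card_Icc, nsmul_eq_mul, ← hre] at hsum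
  calc (K : ℝ) ≤ ((K + 1 - -K : ℤ).toNat : ℝ) * (1 / 2) := by
        rw [show (K + 1 - -K : ℤ) = ((2 * K + 1 : ℕ) : ℤ) by push_cast; ring,
          Int.toNat_natCast]
        push_cast; linarith
    _ ≤ (dirichletKernel T K τ).re := hsum
    _ ≤ ‖dirichletKernel T K τ‖ := Complex.re_le_norm _

lemma le_integral_norm_dirichletKernel_pow_four {T : ℝ} [hT : Fact (0 < T)] {K : ℕ}
    (hK : 1 ≤ K) : T * K ^ 3 / 4 ≤ ∫ x : AddCircle T, ‖dirichletKernel T K x‖ ^ 4 := by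
  have hT := hT.out
  have hK' : (1 : ℝ) ≤ K := by exact_mod_cast hK
  rw [← AddCircle.integral_preimage T (-(T / 2)), show -(T / 2) + T = T / 2 by ring]
  have hsub : Icc (-(T / (8 * K))) (T / (8 * K)) ⊆ Ioc (-(T / 2)) (T / 2) := by
    have : T / (8 * K) < T / 2 := div_lt_div_of_pos_left hT two_pos (by linarith)
    exact fun τ hτ => ⟨by linarith [hτ.1], by linarith [hτ.2]⟩
  have hcont : Continuous fun τ : ℝ => ‖dirichletKernel T K τ‖ ^ 4 :=
    ((continuous_finsetSum _ fun n _ => (fourier n).continuous).comp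
      (AddCircle.continuous_mk' T)).norm.pow 4
  have := mul_le_setIntegral_of_le_on_Icc (by positivity) hsub hcont.integrableOn_Ioc
    (fun τ => by positivity) (fun τ hτ => pow_le_pow_left₀ (Nat.cast_nonneg K)
      (natCast_le_norm_dirichletKernel hT K (abs_le.2 hτ)) 4)
  convert this using 1
  field_simp
  ring

lemma sum_setIntegral_fourier_mul_exp_eq {T : ℝ} (K : ℕ) {M : ℝ} (hM : 0 ≤ M)
    (x : AddCircle T) (t : ℝ) :
    ∑ n ∈ Finset.Icc (-(K : ℤ)) K,
        ∫ lam in Icc (-M) M, fourier n x * Complex.exp (2 * π * lam * t * Complex.I) =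
      dirichletKernel T K x * ((2 * M * sinc (2 * π * M * t) : ℝ) : ℂ) := by
  simp only [dirichletKernel, Finset.sum_mul, integral_const_mul,
    setIntegral_Icc_exp_eq_sinc M t hM]

lemma le_integral_integral_norm_pow_four {T : ℝ} [Fact (0 < T)] {K : ℕ} (hK : 1 ≤ K)
    {M : ℝ} (hM : 0 < M) :
    T * K ^ 3 / 4 * (M ^ 3 / 4) ≤ ∫ x : AddCircle T, ∫ t : ℝ,
      ‖dirichletKernel T K x * ((2 * M * sinc (2 * π * M * t) : ℝ) : ℂ)‖ ^ 4 := by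
  simp only [integral_integral_norm_mul_pow, Complex.norm_real, Real.norm_eq_abs,
    (show Even 4 by decide).pow_abs]
  exact mul_le_mul (le_integral_norm_dirichletKernel_pow_four hK)
    (le_integral_sinc_pow_four hM) (by positivity) (integral_nonneg fun x => by positivity)

theorem stmt_12_general (N : ℕ)
    (u : ℕ → AddCircle (1 : ℝ) → ℝ → ℂ)
    (hu : ∀ (K : ℕ) (x : AddCircle (1 : ℝ)) (t : ℝ),
      u K x t = ∑ n ∈ Finset.Icc (-(K : ℤ)) (K : ℤ),
        ∫ lam in Set.Icc (-((K : ℝ) ^ (2 * N + 1))) ((K : ℝ) ^ (2 * N + 1)),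
          fourier n x * Complex.exp (2 * Real.pi * lam * t * Complex.I)) :
    ∃ c : ℝ, 0 < c ∧ ∀ K : ℕ, 1 ≤ K →
      c * (K : ℝ) ^ ((3 * ((N : ℝ) + 1)) / 2) ≤
        (∫ x : AddCircle (1 : ℝ), ∫ t : ℝ, ‖u K x t‖ ^ 4) ^ (1/4 : ℝ) := by
  have : Fact ((0 : ℝ) < 1) := ⟨one_pos⟩
  refine ⟨1 / 2, by norm_num, fun K hK => ?_⟩
  have hK1 : (1 : ℝ) ≤ K := by exact_mod_cast hK
  set M : ℝ := (K : ℝ) ^ (2 * N + 1) with hM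
  have hfactor : ∀ x t,
      u K x t = dirichletKernel 1 K x * ((2 * M * sinc (2 * π * M * t) : ℝ) : ℂ) :=
    fun x t => by rw [hu, ← hM, sum_setIntegral_fourier_mul_exp_eq K (by positivity)]
  have hlow := le_integral_integral_norm_pow_four (T := 1) hK (M := M) (by positivity)
  simp only [← hfactor] at hlow
  have hpow : ((K : ℝ) ^ ((3 * ((N : ℝ) + 1)) / 2)) ^ 4 = (K : ℝ) ^ (6 * N + 6) := by
    rw [← Real.rpow_natCast, ← Real.rpow_mul (by positivity), ← Real.rpow_natCast]
    push_cast
    ring_nf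
  calc 1 / 2 * (K : ℝ) ^ ((3 * ((N : ℝ) + 1)) / 2)
      = ((1 / 2 * (K : ℝ) ^ ((3 * ((N : ℝ) + 1)) / 2)) ^ 4) ^ (1 / 4 : ℝ) := by
        rw [← Real.rpow_natCast, ← Real.rpow_mul (by positivity)]; norm_num
    _ = (1 * K ^ 3 / 4 * (M ^ 3 / 4)) ^ (1 / 4 : ℝ) := by rw [mul_pow, hpow, hM]; ring_nf
    _ ≤ _ := Real.rpow_le_rpow (by positivity) hlow (by norm_num)

theorem stmt_12 (N : ℕ) (hN : 1 ≤ N)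
    (u : ℕ → AddCircle (1 : ℝ) → ℝ → ℂ)
    (hu : ∀ (K : ℕ) (x : AddCircle (1 : ℝ)) (t : ℝ),
      u K x t = ∑ n ∈ Finset.Icc (-(K : ℤ)) (K : ℤ),
        ∫ lam in Set.Icc (-((K : ℝ) ^ (2 * N + 1))) ((K : ℝ) ^ (2 * N + 1)),
          fourier n x * Complex.exp (2 * Real.pi * lam * t * Complex.I)) :
    ∃ c : ℝ, 0 < c ∧ ∀ K : ℕ, 1 ≤ K →
      c * (K : ℝ) ^ ((3 * ((N : ℝ) + 1)) / 2) ≤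
        (∫ x : AddCircle (1 : ℝ), ∫ t : ℝ, ‖u K x t‖ ^ 4) ^ (1/4 : ℝ) :=
  stmt_12_general N u hu
end
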